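/- For every ε > 0, every twice continuously differentiable x : [0,l] → ℝ with x(0) = x(l) = 0, every y, ξ₂ ∈ ℝ, and every continuously differentiable ξ₁ : [0,l] → ℝ with ξ₁(0) = ξ₁(l) = 0, the following lower estimate holds: 2y·(c² y + ∫₀ˡ D(z) x(z) dz + ξ₂) + 2∫₀ˡ x''(z)·(a² x''(z) + Φ(x(z)) + B(z)·y + ξ₁(z)) dz ≥ (2c² − ε)·y² + (2π²a²/l² − ε)·‖x'‖²_{L²} − 2·((l/π)·‖D‖_{L²} + ‖B'‖_{L²})·‖x'‖_{L²}·|y| − ε⁻¹·(‖ξ₁'‖²_{L²} + ξ₂²). -/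

import Mathlib

/-!
Expanding the integral and integrating by parts (every boundary term vanishes), the right-hand
side equals `2y(c²y + ∫ D x + ξ₂) + 2a² ∫ x''² - 2∫ Φ'(x) x'² - 2y ∫ B' x' - 2∫ ξ₁' x'`.
The `Φ'` term is nonnegative. Wirtinger's inequality `‖x‖ ≤ (l/π)‖x'‖` combined with
`‖x'‖² = -∫ x x'' ≤ ‖x‖ ‖x''‖` gives `‖x''‖ ≥ (π/l)‖x'‖`, and the remaining cross terms are
bounded by Cauchy–Schwarz, Wirtinger and Young's inequality `2AB ≤ εA² + ε⁻¹B²`.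

Wirtinger's inequality comes from the Riccati equation `q' = -(k² + q²)` solved by
`q z = k cot (k z + θ)`: it gives `f'² - k² f² = (f' - f q)² + (f² q)'`, so integrating yields
`k² ∫ f² ≤ ∫ f'²` whenever `q` is regular on `[0, l]`. A phase `θ > 0` makes this so for every
`k < π / l`, and letting `k → π / l` gives the sharp constant.
-/

open Set Real

/-- `‖f‖_{L²}` on `[0,l]`. -/
noncomputable def L2norm (l : ℝ) (f : ℝ → ℝ) : ℝ :=
  Real.sqrt (∫ z in (0:ℝ)..l, (f z)^2)

open MeasureTheory intervalIntegral Filter Topology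

lemma neg_abs_mul_le_mul_of_abs_le {a b c : ℝ} (h : |b| ≤ c) : -(|a| * c) ≤ a * b :=
  calc -(|a| * c) ≤ -|a * b| := by rw [abs_mul]; gcongr
    _ ≤ a * b := neg_abs_le _

lemma apply_zero_eq_zero_of_mul_apply_nonpos {Φ : ℝ → ℝ} (hΦ : ContinuousAt Φ 0)
    (h : ∀ s, s * Φ s ≤ 0) : Φ 0 = 0 :=
  le_antisymm
    (le_of_tendsto (hΦ.tendsto.mono_left nhdsWithin_le_nhds : Tendsto Φ (𝓝[>] 0) _) <|
      eventually_nhdsWithin_of_forall fun s hs => nonpos_of_mul_nonpos_right (h s) hs)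
    (ge_of_tendsto (hΦ.tendsto.mono_left nhdsWithin_le_nhds : Tendsto Φ (𝓝[<] 0) _) <|
      eventually_nhdsWithin_of_forall fun s hs => nonneg_of_mul_nonpos_right (h s) hs)

lemma integral_mul_deriv_eq_neg_of_eq_zero {a b : ℝ} {u u' v v' : ℝ → ℝ} (hab : a ≤ b)
    (hu : ∀ z ∈ Icc a b, HasDerivAt u (u' z) z) (hv : ∀ z ∈ Icc a b, HasDerivAt v (v' z) z)
    (hu' : IntervalIntegrable u' volume a b) (hv' : IntervalIntegrable v' volume a b)
    (hua : u a = 0) (hub : u b = 0) :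
    ∫ z in a..b, u z * v' z = -∫ z in a..b, u' z * v z := by
  rw [integral_mul_deriv_eq_deriv_mul (uIcc_of_le hab ▸ hu) (uIcc_of_le hab ▸ hv) hu' hv',
    hua, hub]
  ring

lemma hasDerivAt_mul_cos_div_sin {k θ z : ℝ} (hz : sin (k * z + θ) ≠ 0) :
    HasDerivAt (fun w => k * cos (k * w + θ) / sin (k * w + θ))
      (-(k ^ 2 + (k * cos (k * z + θ) / sin (k * z + θ)) ^ 2)) z := by
  have hlin : HasDerivAt (fun w => k * w + θ) k z := by
    simpa using ((hasDerivAt_id z).const_mul k).add_const θ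
  refine ((hlin.cos.const_mul k).div hlin.sin hz).congr_deriv ?_
  field_simp
  ring

lemma L2norm_nonneg (l : ℝ) (f : ℝ → ℝ) : 0 ≤ L2norm l f :=
  sqrt_nonneg _

section Interval

variable {l : ℝ}

lemma sq_L2norm (hl : 0 ≤ l) (f : ℝ → ℝ) : L2norm l f ^ 2 = ∫ z in (0:ℝ)..l, f z ^ 2 :=
  sq_sqrt (integral_nonneg hl fun _ _ => sq_nonneg _)

lemma sq_integral_mul_le_integral_sq_mul_integral_sq {f g : ℝ → ℝ} (hl : 0 ≤ l)
    (hf : ContinuousOn f (Icc 0 l)) (hg : ContinuousOn g (Icc 0 l)) :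
    (∫ z in (0:ℝ)..l, f z * g z) ^ 2 ≤
      (∫ z in (0:ℝ)..l, f z ^ 2) * ∫ z in (0:ℝ)..l, g z ^ 2 := by
  have hf2 : IntervalIntegrable (fun z => f z ^ 2) volume 0 l :=
    (hf.pow 2).intervalIntegrable_of_Icc hl
  have hfg : IntervalIntegrable (fun z => f z * g z) volume 0 l :=
    (hf.mul hg).intervalIntegrable_of_Icc hl
  have hg2 : IntervalIntegrable (fun z => g z ^ 2) volume 0 l :=
    (hg.pow 2).intervalIntegrable_of_Icc hl
  -- the quadratic `t ↦ ∫ (t g + f)²` is nonnegative, so its discriminant is nonpositive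
  have hquad : ∀ t : ℝ, 0 ≤ (∫ z in (0:ℝ)..l, g z ^ 2) * (t * t) +
      2 * (∫ z in (0:ℝ)..l, f z * g z) * t + ∫ z in (0:ℝ)..l, f z ^ 2 := by
    intro t
    have hexp : (fun z => (t * g z + f z) ^ 2) =
        fun z => t * t * g z ^ 2 + 2 * t * (f z * g z) + f z ^ 2 := by
      funext z; ring
    have hsq : (∫ z in (0:ℝ)..l, (t * g z + f z) ^ 2) = (∫ z in (0:ℝ)..l, g z ^ 2) * (t * t) +
        2 * (∫ z in (0:ℝ)..l, f z * g z) * t + ∫ z in (0:ℝ)..l, f z ^ 2 := by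
      rw [hexp, integral_add ((hg2.const_mul _).add (hfg.const_mul _)) hf2,
        integral_add (hg2.const_mul _) (hfg.const_mul _), intervalIntegral.integral_const_mul,
        intervalIntegral.integral_const_mul]
      ring
    exact hsq ▸ integral_nonneg hl fun _ _ => sq_nonneg _
  have hdiscrim := discrim_le_zero hquad
  rw [discrim] at hdiscrim
  linarith

lemma abs_integral_mul_le_L2norm_mul_L2norm {f g : ℝ → ℝ} (hl : 0 ≤ l)
    (hf : ContinuousOn f (Icc 0 l)) (hg : ContinuousOn g (Icc 0 l)) :
    |∫ z in (0:ℝ)..l, f z * g z| ≤ L2norm l f * L2norm l g := by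
  rw [L2norm, L2norm, ← sqrt_mul (integral_nonneg hl fun _ _ => sq_nonneg _)]
  exact abs_le_sqrt (sq_integral_mul_le_integral_sq_mul_integral_sq hl hf hg)

lemma integral_mul_add_add_add {c y : ℝ} {h p B q : ℝ → ℝ} (hl : 0 ≤ l)
    (hh : ContinuousOn h (Icc 0 l)) (hp : ContinuousOn p (Icc 0 l))
    (hB : ContinuousOn B (Icc 0 l)) (hq : ContinuousOn q (Icc 0 l)) :
    ∫ z in (0:ℝ)..l, h z * (c * h z + p z + B z * y + q z) =
      c * (∫ z in (0:ℝ)..l, h z ^ 2) + (∫ z in (0:ℝ)..l, p z * h z) +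
        y * (∫ z in (0:ℝ)..l, B z * h z) + ∫ z in (0:ℝ)..l, q z * h z := by
  have hexp : (fun z => h z * (c * h z + p z + B z * y + q z)) =
      fun z => c * h z ^ 2 + p z * h z + y * (B z * h z) + q z * h z := by
    funext z; ring
  have hI : ∀ {g : ℝ → ℝ}, ContinuousOn g (Icc 0 l) → IntervalIntegrable g volume 0 l :=
    fun hg => hg.intervalIntegrable_of_Icc hl
  rw [hexp, intervalIntegral.integral_add, intervalIntegral.integral_add,
    intervalIntegral.integral_add, intervalIntegral.integral_const_mul,
    intervalIntegral.integral_const_mul]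
  all_goals exact hI (by fun_prop)

variable {f f' : ℝ → ℝ}

lemma sq_mul_integral_sq_le_integral_deriv_sq {k θ : ℝ} (hl : 0 ≤ l)
    (hf : ∀ z ∈ Icc 0 l, HasDerivAt f (f' z) z) (hf'c : ContinuousOn f' (Icc 0 l))
    (hf0 : f 0 = 0) (hfl : f l = 0) (hsin : ∀ z ∈ Icc 0 l, 0 < sin (k * z + θ)) :
    k ^ 2 * ∫ z in (0:ℝ)..l, f z ^ 2 ≤ ∫ z in (0:ℝ)..l, f' z ^ 2 := by
  set q : ℝ → ℝ := fun w => k * cos (k * w + θ) / sin (k * w + θ)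
  have hfc : ContinuousOn f (Icc 0 l) := HasDerivAt.continuousOn hf
  have hqc : ContinuousOn q (Icc 0 l) := fun z hz =>
    (hasDerivAt_mul_cos_div_sin (hsin z hz).ne').continuousAt.continuousWithinAt
  have hderiv : ∀ z ∈ Ioo 0 l, HasDerivAt (fun w => f w ^ 2 * q w)
      (2 * f z * f' z * q z - f z ^ 2 * (k ^ 2 + q z ^ 2)) z := by
    intro z hz
    have hfz := hf z (Ioo_subset_Icc_self hz)
    have hqz := hasDerivAt_mul_cos_div_sin (hsin z (Ioo_subset_Icc_self hz)).ne'
    refine ((hfz.fun_pow 2).fun_mul hqz).congr_deriv ?_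
    ring
  have hle := sub_le_integral_of_hasDeriv_right_of_le
    (φ := fun z => f' z ^ 2 - k ^ 2 * f z ^ 2) hl ((hfc.pow 2).mul hqc)
    (fun z hz => (hderiv z hz).hasDerivWithinAt)
    (((hf'c.pow 2).sub (continuousOn_const.mul (hfc.pow 2))).integrableOn_Icc)
    (fun z _ => by nlinarith [sq_nonneg (f' z - f z * q z)])
  have hf2 : IntervalIntegrable (fun z => f z ^ 2) volume 0 l :=
    (hfc.pow 2).intervalIntegrable_of_Icc hl
  have hf'2 : IntervalIntegrable (fun z => f' z ^ 2) volume 0 l :=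
    (hf'c.pow 2).intervalIntegrable_of_Icc hl
  rw [integral_sub hf'2 (hf2.const_mul _), intervalIntegral.integral_const_mul] at hle
  simp only [Pi.mul_apply, Pi.pow_apply, hf0, hfl] at hle
  linarith

lemma sq_pi_div_mul_integral_sq_le_integral_deriv_sq (hl : 0 < l)
    (hf : ∀ z ∈ Icc 0 l, HasDerivAt f (f' z) z) (hf'c : ContinuousOn f' (Icc 0 l))
    (hf0 : f 0 = 0) (hfl : f l = 0) :
    (π / l) ^ 2 * ∫ z in (0:ℝ)..l, f z ^ 2 ≤ ∫ z in (0:ℝ)..l, f' z ^ 2 := by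
  have hlim : Tendsto (fun k : ℝ => k ^ 2 * ∫ z in (0:ℝ)..l, f z ^ 2) (𝓝[<] (π / l))
      (𝓝 ((π / l) ^ 2 * ∫ z in (0:ℝ)..l, f z ^ 2)) :=
    ((continuous_pow 2).mul continuous_const).continuousWithinAt
  refine le_of_tendsto hlim ?_
  filter_upwards [Ioo_mem_nhdsLT (div_pos pi_pos hl)] with k ⟨hk0, hkl⟩
  -- for `k < π / l` the phase `(π - k l) / 2` centres `k z + θ` in `(0, π)`
  have hkl' : k * l < π := (lt_div_iff₀ hl).mp hkl
  refine sq_mul_integral_sq_le_integral_deriv_sq (θ := (π - k * l) / 2) hl.le hf hf'c hf0 hfl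
    fun z hz => sin_pos_of_pos_of_lt_pi ?_ ?_
  · nlinarith [hz.1]
  · nlinarith [hz.2]

lemma L2norm_le_div_pi_mul_L2norm_deriv (hl : 0 < l)
    (hf : ∀ z ∈ Icc 0 l, HasDerivAt f (f' z) z) (hf'c : ContinuousOn f' (Icc 0 l))
    (hf0 : f 0 = 0) (hfl : f l = 0) :
    L2norm l f ≤ l / π * L2norm l f' := by
  have hW := sq_pi_div_mul_integral_sq_le_integral_deriv_sq hl hf hf'c hf0 hfl
  rw [← pow_le_pow_iff_left₀ (L2norm_nonneg l f)
    (mul_nonneg (div_nonneg hl.le pi_pos.le) (L2norm_nonneg l f')) two_ne_zero,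
    mul_pow, sq_L2norm hl.le, sq_L2norm hl.le]
  calc ∫ z in (0:ℝ)..l, f z ^ 2 = (l / π) ^ 2 * ((π / l) ^ 2 * ∫ z in (0:ℝ)..l, f z ^ 2) := by
        field_simp
    _ ≤ (l / π) ^ 2 * ∫ z in (0:ℝ)..l, f' z ^ 2 := by gcongr

lemma abs_integral_mul_le_div_pi_mul_L2norm_mul_L2norm_deriv {g : ℝ → ℝ} (hl : 0 < l)
    (hg : ContinuousOn g (Icc 0 l)) (hf : ∀ z ∈ Icc 0 l, HasDerivAt f (f' z) z)
    (hf'c : ContinuousOn f' (Icc 0 l)) (hf0 : f 0 = 0) (hfl : f l = 0) :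
    |∫ z in (0:ℝ)..l, g z * f z| ≤ l / π * L2norm l g * L2norm l f' :=
  calc |∫ z in (0:ℝ)..l, g z * f z| ≤ L2norm l g * L2norm l f :=
        abs_integral_mul_le_L2norm_mul_L2norm hl.le hg (HasDerivAt.continuousOn hf)
    _ ≤ L2norm l g * (l / π * L2norm l f') := by
        gcongr
        · exact L2norm_nonneg l g
        · exact L2norm_le_div_pi_mul_L2norm_deriv hl hf hf'c hf0 hfl
    _ = l / π * L2norm l g * L2norm l f' := by ring

lemma sq_pi_div_mul_sq_L2norm_deriv_le_integral_deriv2_sq {x x' x'' : ℝ → ℝ} (hl : 0 < l)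
    (hx : ∀ z ∈ Icc 0 l, HasDerivAt x (x' z) z) (hx' : ∀ z ∈ Icc 0 l, HasDerivAt x' (x'' z) z)
    (hx''c : ContinuousOn x'' (Icc 0 l)) (hx0 : x 0 = 0) (hxl : x l = 0) :
    (π / l) ^ 2 * L2norm l x' ^ 2 ≤ ∫ z in (0:ℝ)..l, x'' z ^ 2 := by
  have hx'c : ContinuousOn x' (Icc 0 l) := HasDerivAt.continuousOn hx'
  have hparts : L2norm l x' ^ 2 = -∫ z in (0:ℝ)..l, x z * x'' z := by
    rw [sq_L2norm hl.le, integral_mul_deriv_eq_neg_of_eq_zero hl.le hx hx'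
      (hx'c.intervalIntegrable_of_Icc hl.le) (hx''c.intervalIntegrable_of_Icc hl.le) hx0 hxl]
    simp only [neg_neg, sq]
  have hsq : L2norm l x' * L2norm l x' ≤ l / π * L2norm l x'' * L2norm l x' :=
    calc L2norm l x' * L2norm l x' = -∫ z in (0:ℝ)..l, x'' z * x z := by
          simp only [← sq, hparts, mul_comm]
      _ ≤ l / π * L2norm l x'' * L2norm l x' :=
        (neg_le_abs _).trans
          (abs_integral_mul_le_div_pi_mul_L2norm_mul_L2norm_deriv hl hx''c hx hx'c hx0 hxl)
  have hle : L2norm l x' ≤ l / π * L2norm l x'' := by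
    rcases (L2norm_nonneg l x').eq_or_lt with h | h
    · rw [← h]
      exact mul_nonneg (div_nonneg hl.le pi_pos.le) (L2norm_nonneg l x'')
    · exact le_of_mul_le_mul_right hsq h
  calc (π / l) ^ 2 * L2norm l x' ^ 2 ≤ (π / l) ^ 2 * (l / π * L2norm l x'') ^ 2 := by
        gcongr
        exact L2norm_nonneg l x'
    _ = ∫ z in (0:ℝ)..l, x'' z ^ 2 := by
        rw [← sq_L2norm hl.le]
        field_simp

lemma integral_comp_mul_deriv2_nonneg {Φ Φ' x x' x'' : ℝ → ℝ} (hl : 0 ≤ l)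
    (hΦ : ∀ s, HasDerivAt Φ (Φ' s) s) (hΦ'c : Continuous Φ') (hΦ'le : ∀ s, Φ' s ≤ 0)
    (hΦ0 : Φ 0 = 0) (hx : ∀ z ∈ Icc 0 l, HasDerivAt x (x' z) z)
    (hx' : ∀ z ∈ Icc 0 l, HasDerivAt x' (x'' z) z) (hx''c : ContinuousOn x'' (Icc 0 l))
    (hx0 : x 0 = 0) (hxl : x l = 0) :
    0 ≤ ∫ z in (0:ℝ)..l, Φ (x z) * x'' z := by
  have hcont : ContinuousOn (fun z => Φ' (x z) * x' z) (Icc 0 l) :=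
    (hΦ'c.comp_continuousOn (HasDerivAt.continuousOn hx)).mul (HasDerivAt.continuousOn hx')
  rw [integral_mul_deriv_eq_neg_of_eq_zero (u := fun z => Φ (x z)) hl
    (fun z hz => (hΦ (x z)).comp z (hx z hz)) hx' (hcont.intervalIntegrable_of_Icc hl)
    (hx''c.intervalIntegrable_of_Icc hl) (by rw [hx0, hΦ0]) (by rw [hxl, hΦ0]),
    ← intervalIntegral.integral_neg]
  exact integral_nonneg hl fun z _ => by nlinarith [hΦ'le (x z), sq_nonneg (x' z)]

end Interval

theorem stmt8_general (l a c : ℝ) (hl : 0 < l)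
    (Φ Φ' : ℝ → ℝ) (hΦd : ∀ s, HasDerivAt Φ (Φ' s) s) (hΦ'c : Continuous Φ')
    (hΦ'le : ∀ s : ℝ, Φ' s ≤ 0) (hΦ : ∀ s : ℝ, s * Φ s ≤ 0)
    (D : ℝ → ℝ) (hD : ContinuousOn D (Icc 0 l))
    (B B' : ℝ → ℝ) (hB : ∀ z ∈ Icc (0:ℝ) l, HasDerivAt B (B' z) z)
    (hB'c : ContinuousOn B' (Icc 0 l)) (hB0 : B 0 = 0) (hBl : B l = 0)
    (ε : ℝ) (hε : 0 < ε)
    (x x' x'' : ℝ → ℝ)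
    (hx : ∀ z ∈ Icc (0:ℝ) l, HasDerivAt x (x' z) z)
    (hx' : ∀ z ∈ Icc (0:ℝ) l, HasDerivAt x' (x'' z) z)
    (hx''c : ContinuousOn x'' (Icc 0 l))
    (hx0 : x 0 = 0) (hxl : x l = 0)
    (y ξ₂ : ℝ)
    (ξ₁ ξ₁' : ℝ → ℝ) (hξ₁ : ∀ z ∈ Icc (0:ℝ) l, HasDerivAt ξ₁ (ξ₁' z) z)
    (hξ₁'c : ContinuousOn ξ₁' (Icc 0 l)) (hξ₁0 : ξ₁ 0 = 0) (hξ₁l : ξ₁ l = 0) :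
    (2 * c^2 - ε) * y^2 + (2 * π^2 * a^2 / l^2 - ε) * (L2norm l x')^2 -
      2 * ((l / π) * L2norm l D + L2norm l B') * L2norm l x' * |y| -
      ε⁻¹ * ((L2norm l ξ₁')^2 + ξ₂^2) ≤
    2 * y * (c^2 * y + (∫ z in (0:ℝ)..l, D z * x z) + ξ₂) +
      2 * (∫ z in (0:ℝ)..l, x'' z * (a^2 * x'' z + Φ (x z) + B z * y + ξ₁ z)) := by
  have hΦc : Continuous Φ := continuous_iff_continuousAt.2 fun s => (hΦd s).continuousAt
  have hx'c : ContinuousOn x' (Icc 0 l) := HasDerivAt.continuousOn hx'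
  have hx''I : IntervalIntegrable x'' volume 0 l := hx''c.intervalIntegrable_of_Icc hl.le
  have hΦ0 := apply_zero_eq_zero_of_mul_apply_nonpos hΦc.continuousAt hΦ
  rw [integral_mul_add_add_add (p := fun z => Φ (x z)) hl.le hx''c
      (hΦc.comp_continuousOn (HasDerivAt.continuousOn hx)) (HasDerivAt.continuousOn hB)
      (HasDerivAt.continuousOn hξ₁),
    integral_mul_deriv_eq_neg_of_eq_zero hl.le hB hx' (hB'c.intervalIntegrable_of_Icc hl.le)
      hx''I hB0 hBl,
    integral_mul_deriv_eq_neg_of_eq_zero hl.le hξ₁ hx' (hξ₁'c.intervalIntegrable_of_Icc hl.le)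
      hx''I hξ₁0 hξ₁l]
  have hΦx := integral_comp_mul_deriv2_nonneg hl.le hΦd hΦ'c hΦ'le hΦ0 hx hx' hx''c hx0 hxl
  have hx'' := mul_le_mul_of_nonneg_left
    (sq_pi_div_mul_sq_L2norm_deriv_le_integral_deriv2_sq hl hx hx' hx''c hx0 hxl) (sq_nonneg a)
  have hyD := neg_abs_mul_le_mul_of_abs_le (a := y)
    (abs_integral_mul_le_div_pi_mul_L2norm_mul_L2norm_deriv hl hD hx hx'c hx0 hxl)
  have hyB := neg_abs_mul_le_mul_of_abs_le (a := -y)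
    (abs_integral_mul_le_L2norm_mul_L2norm hl.le hB'c hx'c)
  have hξx := abs_le.mp (abs_integral_mul_le_L2norm_mul_L2norm hl.le hξ₁'c hx'c)
  have hξ₁ε := two_mul_le_add_mul_sq (a := L2norm l x') (b := L2norm l ξ₁') hε
  have hξ₂ε := two_mul_le_add_mul_sq (a := -y) (b := ξ₂) hε
  rw [neg_sq] at hξ₂ε
  rw [abs_neg] at hyB
  rw [show 2 * π ^ 2 * a ^ 2 / l ^ 2 = 2 * (a ^ 2 * (π / l) ^ 2) by ring]
  linarith

/-- lower estimate for `Ẇ` in the proof of Proposition 3: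
`2y·(c²y + ∫₀ˡ D x + ξ₂) + 2∫₀ˡ x''·(a²x'' + Φ(x) + B y + ξ₁)
  ≥ (2c² − ε)y² + (2π²a²/l² − ε)‖x'‖²_{L²}
    − 2((l/π)‖D‖_{L²} + ‖B'‖_{L²})‖x'‖_{L²}|y| − ε⁻¹(‖ξ₁'‖²_{L²} + ξ₂²)`. -/
theorem stmt8 (l a c : ℝ) (hl : 0 < l) (ha : 0 < a) (hc : 0 < c)
    (Φ Φ' : ℝ → ℝ) (hΦd : ∀ s, HasDerivAt Φ (Φ' s) s) (hΦ'c : Continuous Φ')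
    (hΦ'le : ∀ s : ℝ, Φ' s ≤ 0) (hΦ : ∀ s : ℝ, s * Φ s ≤ 0)
    (D : ℝ → ℝ) (hD : ContinuousOn D (Icc 0 l))
    (B B' : ℝ → ℝ) (hB : ∀ z ∈ Icc (0:ℝ) l, HasDerivAt B (B' z) z)
    (hB'c : ContinuousOn B' (Icc 0 l)) (hB0 : B 0 = 0) (hBl : B l = 0)
    (ε : ℝ) (hε : 0 < ε)
    (x x' x'' : ℝ → ℝ)
    (hx : ∀ z ∈ Icc (0:ℝ) l, HasDerivAt x (x' z) z)
    (hx' : ∀ z ∈ Icc (0:ℝ) l, HasDerivAt x' (x'' z) z)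
    (hx''c : ContinuousOn x'' (Icc 0 l))
    (hx0 : x 0 = 0) (hxl : x l = 0)
    (y ξ₂ : ℝ)
    (ξ₁ ξ₁' : ℝ → ℝ) (hξ₁ : ∀ z ∈ Icc (0:ℝ) l, HasDerivAt ξ₁ (ξ₁' z) z)
    (hξ₁'c : ContinuousOn ξ₁' (Icc 0 l)) (hξ₁0 : ξ₁ 0 = 0) (hξ₁l : ξ₁ l = 0) :
    (2 * c^2 - ε) * y^2 + (2 * π^2 * a^2 / l^2 - ε) * (L2norm l x')^2 -
      2 * ((l / π) * L2norm l D + L2norm l B') * L2norm l x' * |y| -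
      ε⁻¹ * ((L2norm l ξ₁')^2 + ξ₂^2) ≤
    2 * y * (c^2 * y + (∫ z in (0:ℝ)..l, D z * x z) + ξ₂) +
      2 * (∫ z in (0:ℝ)..l, x'' z * (a^2 * x'' z + Φ (x z) + B z * y + ξ₁ z)) :=
  stmt8_general l a c hl Φ Φ' hΦd hΦ'c hΦ'le hΦ D hD B B' hB hB'c hB0 hBl ε hε x x' x'' hx hx' hx''c
    hx0 hxl y ξ₂ ξ₁ ξ₁' hξ₁ hξ₁'c hξ₁0 hξ₁l
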